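/- arXiv:1404.2016 — 13 statements merged into one kernel-verified Lean document; each statement's English description precedes it below -/
import Mathlib

section
/- Let G be a finite group, k a field, ω a normalized 3-cocycle of G with values in kˣ, and define for g,x,y ∈ G: θ_g(x,y) = ω(g,x,y)·ω(x,y,g^{xy}) / ω(x,g^x,y), where g^x = x⁻¹gx. Then θ satisfies the twisted 2-cocycle condition: θ_{g^x}(y,z)·θ_g(x,yz) = θ_g(xy,z)·θ_g(x,y) for all g,x,y,z ∈ G. -/
/-- For a normalized 3-cocycle ω of a finite group G with values in kˣ and
θ_g(x,y) = ω(g,x,y)·ω(x,y,g^{xy})/ω(x,g^x,y) (where g^x = x⁻¹gx), θ satisfies the twisted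
2-cocycle condition θ_{g^x}(y,z)·θ_g(x,yz) = θ_g(xy,z)·θ_g(x,y). -/
theorem stmt0 {G : Type*} [Group G] [Finite G] {k : Type*} [Field k]
    (ω : G → G → G → kˣ)
    (hω : ∀ a b c d : G,
      ω a b c * ω a (b * c) d * ω b c d = ω (a * b) c d * ω a b (c * d))
    (hnorm : ∀ a b : G, ω 1 a b = 1 ∧ ω a 1 b = 1 ∧ ω a b 1 = 1)
    (θ : G → G → G → kˣ)
    (hθ : ∀ g x y : G,
      θ g x y = ω g x y * ω x y ((x * y)⁻¹ * g * (x * y)) / ω x (x⁻¹ * g * x) y) :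
    ∀ g x y z : G,
      θ (x⁻¹ * g * x) y z * θ g x (y * z) = θ g (x * y) z * θ g x y := by
  intro g x y z
  have k1 := hω g x y z
  have k2 := hω x (x⁻¹ * (g * x)) y z
  have k3 := hω x y (y⁻¹ * (x⁻¹ * (g * (x * y)))) z
  have k4 := hω x y z (z⁻¹ * (y⁻¹ * (x⁻¹ * (g * (x * (y * z))))))
  simp only [hθ, div_mul_div_comm, div_eq_div_iff_mul_eq_mul]
  simp only [mul_inv_rev, mul_assoc, mul_inv_cancel_left, inv_mul_cancel_left] at k1 k2 k3 k4 ⊢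
  have key : (ω g x y * (ω g (x * y) z * ω x y z)) *
      ((ω (g * x) y z * ω x (x⁻¹ * (g * x)) (y * z)) *
        ((ω x y (y⁻¹ * (x⁻¹ * (g * (x * y)))) *
            (ω x (x⁻¹ * (g * (x * y))) z * ω y (y⁻¹ * (x⁻¹ * (g * (x * y)))) z)) *
          (ω (x * y) z (z⁻¹ * (y⁻¹ * (x⁻¹ * (g * (x * (y * z)))))) *
            ω x y (y⁻¹ * (x⁻¹ * (g * (x * (y * z)))))))) =
      (ω (g * x) y z * ω g x (y * z)) *
      ((ω x (x⁻¹ * (g * x)) y * (ω x (x⁻¹ * (g * (x * y))) z * ω (x⁻¹ * (g * x)) y z)) *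
        ((ω (x * y) (y⁻¹ * (x⁻¹ * (g * (x * y)))) z *
            ω x y (y⁻¹ * (x⁻¹ * (g * (x * (y * z)))))) *
          (ω x y z *
            (ω x (y * z) (z⁻¹ * (y⁻¹ * (x⁻¹ * (g * (x * (y * z)))))) *
              ω y z (z⁻¹ * (y⁻¹ * (x⁻¹ * (g * (x * (y * z)))))))))) := by
    rw [k1, k2, k3, k4]
  have keyv := congrArg Units.val key
  push_cast at keyv
  rw [Units.ext_iff]
  push_cast
  have hne := Units.ne_zero ((ω (g * x) y z * ω g x (y * z)) *
      ((ω x (x⁻¹ * (g * x)) y * (ω x (x⁻¹ * (g * (x * y))) z * ω (x⁻¹ * (g * x)) y z)) *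
        ((ω (x * y) (y⁻¹ * (x⁻¹ * (g * (x * y)))) z *
            ω x y (y⁻¹ * (x⁻¹ * (g * (x * (y * z)))))) *
          (ω x y z *
            (ω x (y * z) (z⁻¹ * (y⁻¹ * (x⁻¹ * (g * (x * (y * z)))))) *
              ω y z (z⁻¹ * (y⁻¹ * (x⁻¹ * (g * (x * (y * z)))))))))))
  push_cast at hne
  have h6 : (↑(ω (x⁻¹ * (g * x)) y z) *
      (↑(ω y z (z⁻¹ * (y⁻¹ * (x⁻¹ * (g * (x * (y * z))))))) *
        (↑(ω g x (y * z)) *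
          (↑(ω x (y * z) (z⁻¹ * (y⁻¹ * (x⁻¹ * (g * (x * (y * z))))))) *
            (↑(ω (x * y) (y⁻¹ * (x⁻¹ * (g * (x * y)))) z) * ↑(ω x (x⁻¹ * (g * x)) y))))) : k) *
      (↑(ω g x y) * (↑(ω g (x * y) z) * ↑(ω x y z)) *
      (↑(ω (g * x) y z) * ↑(ω x (x⁻¹ * (g * x)) (y * z)) *
        (↑(ω x y (y⁻¹ * (x⁻¹ * (g * (x * y))))) *
            (↑(ω x (x⁻¹ * (g * (x * y))) z) * ↑(ω y (y⁻¹ * (x⁻¹ * (g * (x * y)))) z)) *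
          (↑(ω (x * y) z (z⁻¹ * (y⁻¹ * (x⁻¹ * (g * (x * (y * z))))))) *
            ↑(ω x y (y⁻¹ * (x⁻¹ * (g * (x * (y * z)))))))))) =
    (↑(ω g (x * y) z) *
      (↑(ω (x * y) z (z⁻¹ * (y⁻¹ * (x⁻¹ * (g * (x * (y * z))))))) *
        (↑(ω g x y) *
          (↑(ω x y (y⁻¹ * (x⁻¹ * (g * (x * y))))) *
            (↑(ω y (y⁻¹ * (x⁻¹ * (g * (x * y)))) z) * ↑(ω x (x⁻¹ * (g * x)) (y * z))))))) *
      (↑(ω (g * x) y z) * ↑(ω g x (y * z)) *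
      (↑(ω x (x⁻¹ * (g * x)) y) * (↑(ω x (x⁻¹ * (g * (x * y))) z) * ↑(ω (x⁻¹ * (g * x)) y z)) *
        (↑(ω (x * y) (y⁻¹ * (x⁻¹ * (g * (x * y)))) z) * ↑(ω x y (y⁻¹ * (x⁻¹ * (g * (x * (y * z)))))) *
          (↑(ω x y z) *
            (↑(ω x (y * z) (z⁻¹ * (y⁻¹ * (x⁻¹ * (g * (x * (y * z))))))) *
              ↑(ω y z (z⁻¹ * (y⁻¹ * (x⁻¹ * (g * (x * (y * z)))))))))))) := by ring
  rw [keyv] at h6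
  exact mul_right_cancel₀ hne h6
end

section
/- Let G be a finite group, ω a normalized 3-cocycle of G with values in kˣ, and define γ_g(x,y) = ω(x,y,g)·ω(g,x^g,y^g) / ω(x,g,y^g) and θ_g(x,y) = ω(g,x,y)·ω(x,y,g^{xy}) / ω(x,g^x,y). Then for every z in the center Z(G) of G, γ_z = θ_z as functions on G × G. -/
/-- With γ_g(x,y) = ω(x,y,g)·ω(g,x^g,y^g)/ω(x,g,y^g) and
θ_g(x,y) = ω(g,x,y)·ω(x,y,g^{xy})/ω(x,g^x,y)  (x^g = g⁻¹xg), for every z in the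
center of G one has γ_z = θ_z as functions on G × G. -/
theorem stmt1 {G : Type*} [Group G] [Finite G] {k : Type*} [Field k]
    (ω : G → G → G → kˣ)
    (hω : ∀ a b c d : G,
      ω a b c * ω a (b * c) d * ω b c d = ω (a * b) c d * ω a b (c * d))
    (hnorm : ∀ a b : G, ω 1 a b = 1 ∧ ω a 1 b = 1 ∧ ω a b 1 = 1)
    (γ θ : G → G → G → kˣ)
    (hγ : ∀ g x y : G,
      γ g x y = ω x y g * ω g (g⁻¹ * x * g) (g⁻¹ * y * g) / ω x g (g⁻¹ * y * g))
    (hθ : ∀ g x y : G,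
      θ g x y = ω g x y * ω x y ((x * y)⁻¹ * g * (x * y)) / ω x (x⁻¹ * g * x) y) :
    ∀ z ∈ Subgroup.center G, ∀ x y : G, γ z x y = θ z x y := by
  intro z hz x y
  have hc2 : ∀ a : G, a * z = z * a := fun a => Subgroup.mem_center_iff.mp hz a
  have hc : ∀ a : G, a⁻¹ * z * a = z := fun a => by
    rw [mul_assoc, ← hc2 a, ← mul_assoc, inv_mul_cancel, one_mul]
  have h1 : z⁻¹ * x * z = x := by
    rw [mul_assoc, hc2 x, ← mul_assoc, inv_mul_cancel, one_mul]
  have h2 : z⁻¹ * y * z = y := by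
    rw [mul_assoc, hc2 y, ← mul_assoc, inv_mul_cancel, one_mul]
  rw [hγ, hθ, hc x, hc (x * y), h1, h2, mul_comm (ω x y z) (ω z x y)]
end

section
/- Let G be a finite group, ω a normalized 3-cocycle with values in kˣ, θ_g(x,y) = ω(g,x,y)·ω(x,y,g^{xy})/ω(x,g^x,y). Then for every central element z ∈ Z(G) and all g, y ∈ G, the identity θ_g(z,y)/θ_g(y,z) = θ_z(y, g^y)/θ_z(g, y) holds. -/
/-- With θ_g(x,y) = ω(g,x,y)·ω(x,y,g^{xy})/ω(x,g^x,y) (g^y = y⁻¹gy),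
for every central z and all g, y ∈ G: θ_g(z,y)/θ_g(y,z) = θ_z(y,g^y)/θ_z(g,y). -/
theorem stmt2 {G : Type*} [Group G] [Finite G] {k : Type*} [Field k]
    (ω : G → G → G → kˣ)
    (hω : ∀ a b c d : G,
      ω a b c * ω a (b * c) d * ω b c d = ω (a * b) c d * ω a b (c * d))
    (hnorm : ∀ a b : G, ω 1 a b = 1 ∧ ω a 1 b = 1 ∧ ω a b 1 = 1)
    (θ : G → G → G → kˣ)
    (hθ : ∀ g x y : G,
      θ g x y = ω g x y * ω x y ((x * y)⁻¹ * g * (x * y)) / ω x (x⁻¹ * g * x) y) :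
    ∀ z ∈ Subgroup.center G, ∀ g y : G,
      θ g z y / θ g y z = θ z y (y⁻¹ * g * y) / θ z g y := by
  intro z hz g y
  rw [Subgroup.mem_center_iff] at hz
  have hz1 : ∀ a : G, z⁻¹ * a * z = a := fun a => by
    rw [mul_assoc, hz a, ← mul_assoc, inv_mul_cancel, one_mul]
  have hz2 : ∀ a : G, a⁻¹ * z * a = z := fun a => by
    rw [mul_assoc, ← hz a, ← mul_assoc, inv_mul_cancel, one_mul]
  have h1 : (z * y)⁻¹ * g * (z * y) = y⁻¹ * g * y := by
    have h : (z * y)⁻¹ * g * (z * y) = y⁻¹ * (z⁻¹ * g * z) * y := by group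
    rw [h, hz1]
  have h2 : (y * z)⁻¹ * g * (y * z) = y⁻¹ * g * y := by
    have h : (y * z)⁻¹ * g * (y * z) = z⁻¹ * (y⁻¹ * g * y) * z := by group
    rw [h, hz1]
  rw [hθ, hθ, hθ, hθ, h1, h2, hz1 g, hz2 y, hz2 g, hz2 (g * y),
    hz2 (y * (y⁻¹ * g * y))]
  simp only [div_eq_mul_inv, mul_inv_rev, inv_inv]
  simp only [mul_comm, mul_left_comm, mul_assoc]
end

section
/- Let G be a finite group, ω a normalized 3-cocycle, and suppose z ∈ Z(G) is such that the 2-cocycle γ_z(x,y) = ω(x,y,z)ω(z,x,y)/ω(x,z,y) (using that z is central) is a 2-coboundary, say γ_z = δt_z for some normalized 1-cochain t_z : G → kˣ. Then for all g, y ∈ G: t_z(g)·θ_g(z,y) = t_z(g^y)·θ_g(y,z), where θ_g(x,y) = ω(g,x,y)ω(x,y,g^{xy})/ω(x,g^x,y). -/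
/-- If z ∈ Z(G) and the 2-cocycle γ_z(x,y) = ω(x,y,z)ω(z,x,y)/ω(x,z,y)
is a coboundary, γ_z = δt_z for a normalized 1-cochain t_z, then
t_z(g)·θ_g(z,y) = t_z(g^y)·θ_g(y,z) for all g,y, where
θ_g(x,y) = ω(g,x,y)ω(x,y,g^{xy})/ω(x,g^x,y). -/
theorem stmt3 {G : Type*} [Group G] [Finite G] {k : Type*} [Field k]
    (ω : G → G → G → kˣ)
    (hω : ∀ a b c d : G,
      ω a b c * ω a (b * c) d * ω b c d = ω (a * b) c d * ω a b (c * d))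
    (hnorm : ∀ a b : G, ω 1 a b = 1 ∧ ω a 1 b = 1 ∧ ω a b 1 = 1)
    (θ : G → G → G → kˣ)
    (hθ : ∀ g x y : G,
      θ g x y = ω g x y * ω x y ((x * y)⁻¹ * g * (x * y)) / ω x (x⁻¹ * g * x) y)
    (z : G) (hz : z ∈ Subgroup.center G)
    (t : G → kˣ) (ht1 : t 1 = 1)
    (ht : ∀ x y : G, ω x y z * ω z x y / ω x z y = t x * t y / t (x * y)) :
    ∀ g y : G, t g * θ g z y = t (y⁻¹ * g * y) * θ g y z := by
  intro g y
  have hc : ∀ a : G, a * z = z * a := Subgroup.mem_center_iff.mp hz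
  have h2 : ∀ a : G, z⁻¹ * a * z = a := fun a => by
    rw [mul_assoc, hc, ← mul_assoc, inv_mul_cancel, one_mul]
  have h1 : (z * y)⁻¹ * g * (z * y) = y⁻¹ * g * y := by
    have e : (z * y)⁻¹ * g * (z * y) = y⁻¹ * (z⁻¹ * g * z) * y := by group
    rw [e, h2]
  have h3 : (y * z)⁻¹ * g * (y * z) = y⁻¹ * g * y := by
    have e : (y * z)⁻¹ * g * (y * z) = z⁻¹ * (y⁻¹ * g * y) * z := by group
    rw [e, h2]
  have h5 : y * (y⁻¹ * g * y) = g * y := by group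
  have eq1 := ht g y
  have eq2 := ht y (y⁻¹ * g * y)
  rw [h5] at eq2
  rw [hθ g z y, hθ g y z, h1, h3, h2]
  have eq1' := congrArg (Units.val) eq1
  have eq2' := congrArg (Units.val) eq2
  simp only [Units.val_mul, Units.val_div_eq_div_val] at eq1' eq2'
  ext
  simp only [Units.val_mul, Units.val_div_eq_div_val]
  rw [div_eq_div_iff (Units.ne_zero _) (Units.ne_zero _)] at eq1' eq2'
  rw [mul_div_assoc', mul_div_assoc', div_eq_div_iff (Units.ne_zero _) (Units.ne_zero _)]
  have hTT : (t (g * y) : k) * ((t (g * y) : k))⁻¹ = 1 := mul_inv_cancel₀ (Units.ne_zero _)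
  linear_combination
    ((t g : k) * (ω g z y : k) / (t (g*y) : k)) * eq2'
    - ((t (y⁻¹*g*y) : k) * (ω y z (y⁻¹*g*y) : k) / (t (g*y) : k)) * eq1'
    - ((t g : k) * (ω g z y : k) * (ω z y (y⁻¹*g*y) : k) * (ω y (y⁻¹*g*y) z : k)
       - (t (y⁻¹*g*y) : k) * (ω y z (y⁻¹*g*y) : k) * (ω g y z : k) * (ω z g y : k)) * hTT
end

section
/- Let F, G be finite groups with a right action of F on G by automorphisms, ω a normalized 3-cocycle of G, and (γ, θ) cleft-object data satisfying: θ_{g◁x}(y,z)θ_g(x,yz) = θ_g(xy,z)θ_g(x,y); γ_x(gh,k)γ_x(g,h)ω(g◁x,h◁x,k◁x) = γ_x(h,k)γ_x(g,hk)ω(g,h,k); and γ_{xy}(g,h)/(γ_x(g,h)γ_y(g◁x,h◁x)) = θ_g(x,y)θ_h(x,y)/θ_{gh}(x,y). Then the set F^γ = {x ∈ F : γ_x is a 2-coboundary of G} is a subgroup of F. -/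
/-- For cleft-object data (F, γ, θ) over (G, ω) (right action ◁ of F on G by
automorphisms, written `act g x = g ◁ x`), the set F^γ of x ∈ F such that γ_x is a
2-coboundary of G is a subgroup of F. -/
theorem stmt4 {k : Type*} [Field k] {F G : Type*} [Group F] [Group G]
    [Finite F] [Finite G]
    (act : G → F → G)
    (hact1 : ∀ g : G, act g 1 = g)
    (hactmul : ∀ g : G, ∀ x y : F, act g (x * y) = act (act g x) y)
    (hactauto : ∀ g h : G, ∀ x : F, act (g * h) x = act g x * act h x)
    (ω : G → G → G → kˣ)
    (hω : ∀ a b c d : G,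
      ω a b c * ω a (b * c) d * ω b c d = ω (a * b) c d * ω a b (c * d))
    (hωnorm : ∀ a b : G, ω 1 a b = 1 ∧ ω a 1 b = 1 ∧ ω a b 1 = 1)
    (γ : F → G → G → kˣ) (θ : G → F → F → kˣ)
    (hγnorm : ∀ x : F, ∀ g : G, γ x 1 g = 1 ∧ γ x g 1 = 1)
    (hγ1 : ∀ g h : G, γ 1 g h = 1)
    (hθnorm : ∀ g : G, ∀ x : F, θ g 1 x = 1 ∧ θ g x 1 = 1)
    -- cleft condition (2.2)
    (hc1 : ∀ (g : G) (x y z : F),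
      θ (act g x) y z * θ g x (y * z) = θ g (x * y) z * θ g x y)
    -- cleft condition (2.3)
    (hc2 : ∀ (x : F) (g h l : G),
      γ x (g * h) l * γ x g h * ω (act g x) (act h x) (act l x)
        = γ x h l * γ x g (h * l) * ω g h l)
    -- cleft condition (2.4)
    (hc3 : ∀ (x y : F) (g h : G),
      γ (x * y) g h / (γ x g h * γ y (act g x) (act h x))
        = θ g x y * θ h x y / θ (g * h) x y) :
    ∃ S : Subgroup F, (S : Set F) =
      {x : F | ∃ t : G → kˣ, t 1 = 1 ∧ ∀ g h : G, γ x g h = t g * t h / t (g * h)} := by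
  -- act fixes 1
  have hact1' : ∀ x : F, act 1 x = 1 := fun x => by
    have h := hactauto 1 1 x
    rw [one_mul] at h
    exact (left_eq_mul.mp h)
  -- θ at g = 1 is trivial
  have hθ1 : ∀ x y : F, θ 1 x y = 1 := fun x y => by
    have h := hc3 x y 1 1
    rw [(hγnorm (x*y) 1).1, (hγnorm x 1).1, hact1', (hγnorm y 1).1, one_mul, one_mul,
      mul_div_cancel_right] at h
    simpa using h.symm
  have hactinv : ∀ (a : G) (x : F), act (act a x⁻¹) x = a := fun a x => by
    rw [← hactmul, inv_mul_cancel, hact1]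
  set C : Set F :=
    {x : F | ∃ t : G → kˣ, t 1 = 1 ∧ ∀ g h : G, γ x g h = t g * t h / t (g * h)} with hC
  have hone : (1 : F) ∈ C := ⟨fun _ => 1, rfl, fun g h => by simp [hγ1]⟩
  have hmul : ∀ {x y : F}, x ∈ C → y ∈ C → x * y ∈ C := by
    rintro x y ⟨t, ht1, ht⟩ ⟨s, hs1, hs⟩
    refine ⟨fun g => t g * s (act g x) * θ g x y, by simp [ht1, hs1, hact1', hθ1], fun g h => ?_⟩
    have h3 := hc3 x y g h
    rw [ht g h, hs (act g x) (act h x), ← hactauto] at h3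
    have h4 : γ (x * y) g h
        = (θ g x y * θ h x y / θ (g*h) x y) *
          ((t g * t h / t (g*h)) * (s (act g x) * s (act h x) / s (act (g*h) x))) :=
      (div_eq_iff_eq_mul.mp h3)
    rw [h4]
    ext
    simp only [Units.val_mul, Units.val_div_eq_div_val, Units.val_inv_eq_inv_val]
    field_simp
  have hinv : ∀ {x : F}, x ∈ C → x⁻¹ ∈ C := by
    rintro x ⟨t, ht1, ht⟩
    refine ⟨fun a => (t (act a x⁻¹) * θ (act a x⁻¹) x x⁻¹)⁻¹, by
      simp [hact1', ht1, hθ1], fun a b => ?_⟩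
    have h3 := hc3 x x⁻¹ (act a x⁻¹) (act b x⁻¹)
    rw [mul_inv_cancel, hγ1, hactinv, hactinv, ht, ← hactauto] at h3
    beta_reduce
    set g := act a x⁻¹
    set h := act b x⁻¹
    set p := act (a*b) x⁻¹
    clear_value g h p
    have h4 : γ x⁻¹ a b =
        (θ p x x⁻¹) / ((t g * t h / t p) * (θ g x x⁻¹ * θ h x x⁻¹)) := by
      ext
      have hk : ((1 : kˣ) : k) / ((t g * t h / t p : kˣ) * γ x⁻¹ a b)
          = ((θ g x x⁻¹ * θ h x x⁻¹ / θ p x x⁻¹ : kˣ) : k) := by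
        exact_mod_cast congrArg Units.val h3
      simp only [Units.val_mul, Units.val_div_eq_div_val, Units.val_one, Units.val_inv_eq_inv_val] at hk ⊢
      field_simp at hk ⊢
      linear_combination -hk
    rw [h4]
    ext
    simp only [Units.val_mul, Units.val_div_eq_div_val, Units.val_inv_eq_inv_val]
    field_simp
  exact ⟨{ carrier := C, one_mem' := hone, mul_mem' := hmul, inv_mem' := hinv }, rfl⟩
end

section
/- With cleft-object data (F, γ, θ) for a 3-cocycle ω of G as above, for x ∈ F^γ fix normalized 1-cochains t_x : G → kˣ with δt_x = γ_x. Then the function β(x,y)(g) = (t_x(g)·t_y(g◁x)/t_{xy}(g))·θ_g(x,y) defines, for each x, y ∈ F^γ, a linear character β(x,y) : G → kˣ (i.e. β(x,y)(gh) = β(x,y)(g)β(x,y)(h) for all g,h ∈ G). -/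
/-- For x, y ∈ F^γ with chosen normalized 1-cochains t_x, t_y, t_{xy}
trivializing γ_x, γ_y, γ_{xy} (δt_z = γ_z), the function
β(x,y)(g) = (t_x(g)·t_y(g◁x)/t_{xy}(g))·θ_g(x,y) is a linear character of G. -/
theorem stmt5 {k : Type*} [Field k] {F G : Type*} [Group F] [Group G]
    [Finite F] [Finite G]
    (act : G → F → G)
    (hact1 : ∀ g : G, act g 1 = g)
    (hactmul : ∀ g : G, ∀ x y : F, act g (x * y) = act (act g x) y)
    (hactauto : ∀ g h : G, ∀ x : F, act (g * h) x = act g x * act h x)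
    (ω : G → G → G → kˣ)
    (hω : ∀ a b c d : G,
      ω a b c * ω a (b * c) d * ω b c d = ω (a * b) c d * ω a b (c * d))
    (hωnorm : ∀ a b : G, ω 1 a b = 1 ∧ ω a 1 b = 1 ∧ ω a b 1 = 1)
    (γ : F → G → G → kˣ) (θ : G → F → F → kˣ)
    (hγnorm : ∀ x : F, ∀ g : G, γ x 1 g = 1 ∧ γ x g 1 = 1)
    (hγ1 : ∀ g h : G, γ 1 g h = 1)
    (hθnorm : ∀ g : G, ∀ x : F, θ g 1 x = 1 ∧ θ g x 1 = 1)
    -- cleft condition (2.2)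
    (hc1 : ∀ (g : G) (x y z : F),
      θ (act g x) y z * θ g x (y * z) = θ g (x * y) z * θ g x y)
    -- cleft condition (2.3)
    (hc2 : ∀ (x : F) (g h l : G),
      γ x (g * h) l * γ x g h * ω (act g x) (act h x) (act l x)
        = γ x h l * γ x g (h * l) * ω g h l)
    -- cleft condition (2.4)
    (hc3 : ∀ (x y : F) (g h : G),
      γ (x * y) g h / (γ x g h * γ y (act g x) (act h x))
        = θ g x y * θ h x y / θ (g * h) x y)
    (x y : F) (t : F → G → kˣ)
    (htnorm : ∀ z : F, t z 1 = 1)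
    (hx : ∀ g h : G, γ x g h = t x g * t x h / t x (g * h))
    (hy : ∀ g h : G, γ y g h = t y g * t y h / t y (g * h))
    (hxy : ∀ g h : G, γ (x * y) g h = t (x * y) g * t (x * y) h / t (x * y) (g * h)) :
    ∀ g h : G,
      (t x (g * h) * t y (act (g * h) x) / t (x * y) (g * h)) * θ (g * h) x y
        = ((t x g * t y (act g x) / t (x * y) g) * θ g x y)
          * ((t x h * t y (act h x) / t (x * y) h) * θ h x y) := by
  intro g h
  have H := hc3 x y g h
  rw [hx, hy, hxy] at H
  rw [hactauto]
  rw [Units.ext_iff] at H ⊢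
  push_cast at H ⊢
  field_simp at H ⊢
  linear_combination H
end

section
/- With the data of the previous statement, the function β : F^γ × F^γ → Hom(G,kˣ) given by β(x,y)(g) = (t_x(g)t_y(g◁x)/t_{xy}(g))θ_g(x,y) is a 2-cocycle for the natural action of F^γ on the character group Ĝ = Hom(G,kˣ): β(x,y)·β(xy,z) = (β(y,z)∘(◁x))·β(x,yz), where (χ∘(◁x))(g) = χ(g◁x). -/
private lemma aux1 {k : Type*} [Field k] (A B C D E X P Q R S : kˣ) (h : R * S = Q * P) :
    A*B/C*P * (C*D/E*Q) = B*D/X*R * (A*X/E*S) := by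
  have h' : (R:k) * S = Q * P := by exact_mod_cast congrArg Units.val h
  rw [Units.ext_iff]
  push_cast
  field_simp
  linear_combination (-1:k)*h'

private lemma aux2 {k : Type*} [Field k] (A B C D E X P Q R : kˣ) :
    P*Q/R * ((A*B/C) * (D*E/X)) = (A*D*P) * (B*E*Q) / (C*X*R) := by
  rw [Units.ext_iff]
  push_cast
  field_simp

/-- β(x,y)(g) = (t_x(g)t_y(g◁x)/t_{xy}(g))θ_g(x,y), for x,y ∈ F^γ (with
chosen 1-cochains t_x, δt_x = γ_x), is a 2-cocycle for the natural action of F^γ on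
Ĝ = Hom(G,kˣ):  β(x,y)·β(xy,z) = (β(y,z)∘(◁x))·β(x,yz), evaluated at each g ∈ G. -/
theorem stmt6 {k : Type*} [Field k] {F G : Type*} [Group F] [Group G]
    [Finite F] [Finite G]
    (act : G → F → G)
    (hact1 : ∀ g : G, act g 1 = g)
    (hactmul : ∀ g : G, ∀ x y : F, act g (x * y) = act (act g x) y)
    (hactauto : ∀ g h : G, ∀ x : F, act (g * h) x = act g x * act h x)
    (ω : G → G → G → kˣ)
    (hω : ∀ a b c d : G,
      ω a b c * ω a (b * c) d * ω b c d = ω (a * b) c d * ω a b (c * d))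
    (hωnorm : ∀ a b : G, ω 1 a b = 1 ∧ ω a 1 b = 1 ∧ ω a b 1 = 1)
    (γ : F → G → G → kˣ) (θ : G → F → F → kˣ)
    (hγnorm : ∀ x : F, ∀ g : G, γ x 1 g = 1 ∧ γ x g 1 = 1)
    (hγ1 : ∀ g h : G, γ 1 g h = 1)
    (hθnorm : ∀ g : G, ∀ x : F, θ g 1 x = 1 ∧ θ g x 1 = 1)
    -- cleft condition (2.2)
    (hc1 : ∀ (g : G) (x y z : F),
      θ (act g x) y z * θ g x (y * z) = θ g (x * y) z * θ g x y)
    -- cleft condition (2.3)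
    (hc2 : ∀ (x : F) (g h l : G),
      γ x (g * h) l * γ x g h * ω (act g x) (act h x) (act l x)
        = γ x h l * γ x g (h * l) * ω g h l)
    -- cleft condition (2.4)
    (hc3 : ∀ (x y : F) (g h : G),
      γ (x * y) g h / (γ x g h * γ y (act g x) (act h x))
        = θ g x y * θ h x y / θ (g * h) x y)
    (t : F → G → kˣ)
    (htnorm : ∀ z : F, t z 1 = 1)
    -- F^γ as a set, witnessed by the chosen family t
    (Fγ : Set F)
    (hFγ : ∀ x : F, x ∈ Fγ ↔ (∃ s : G → kˣ, s 1 = 1 ∧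
        ∀ g h : G, γ x g h = s g * s h / s (g * h)))
    (ht : ∀ x ∈ Fγ, ∀ g h : G, γ x g h = t x g * t x h / t x (g * h))
    -- the 2-cochain β on F^γ with values in Ĝ
    (β : F → F → G → kˣ)
    (hβ : ∀ x ∈ Fγ, ∀ y ∈ Fγ, ∀ g : G,
      β x y g = (t x g * t y (act g x) / t (x * y) g) * θ g x y) :
    ∀ x ∈ Fγ, ∀ y ∈ Fγ, ∀ z ∈ Fγ, ∀ g : G,
      β x y g * β (x * y) z g = β y z (act g x) * β x (y * z) g := by
  have hact1' : ∀ w : F, act (1:G) w = 1 := by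
    intro w
    have h := hactauto 1 1 w
    rw [one_mul] at h
    exact (mul_eq_left.mp h.symm)
  have hθ1 : ∀ a b : F, θ (1:G) a b = 1 := by
    intro a b
    have h := hc3 a b 1 1
    simp [hγnorm, hγ1, hact1'] at h
    exact h.symm
  have hmul : ∀ a ∈ Fγ, ∀ b ∈ Fγ, a * b ∈ Fγ := by
    intro a ha b hb
    rw [hFγ]
    refine ⟨fun g => t a g * t b (act g a) * θ g a b, ?_, ?_⟩
    · simp [htnorm, hact1', hθ1]
    · intro g h
      dsimp only
      have h3 := div_eq_iff_eq_mul.mp (hc3 a b g h)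
      rw [h3, ht a ha g h, ht b hb (act g a) (act h a), hactauto g h a]
      exact aux2 (t a g) (t a h) (t a (g*h)) (t b (act g a)) (t b (act h a))
        (t b (act g a * act h a)) (θ g a b) (θ h a b) (θ (g*h) a b)
  intro x hx y hy z hz g
  rw [hβ x hx y hy g, hβ (x*y) (hmul x hx y hy) z hz g,
      hβ y hy z hz (act g x), hβ x hx (y*z) (hmul y hy z hz) g,
      hactmul g x y, ← mul_assoc x y z]
  exact aux1 (t x g) (t y (act g x)) (t (x*y) g) (t z (act (act g x) y)) (t (x*y*z) g)
    (t (y*z) (act g x)) (θ g x y) (θ g (x*y) z) (θ (act g x) y z) (θ g x (y*z))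
    (hc1 g x y z)
end

section
/- Let c = (F, γ, θ) be a cleft object for (G, ω) and let Z_c(F) denote the set of c-central elements, i.e. a ∈ F such that there exists t_a : G → kˣ with Σ_g t_a(g) e_g a a central group-like element of H = k^G_ω #_c kF. Then Z_c(F) is a subgroup of the center Z(F) of F, and every element of Z_c(F) acts trivially on G. -/
/-- The underlying space of the cleft extension H = k^G_ω #_c kF: functions on the
basis {e_g x}. Multiplication: e_g x · e_h y = δ_{g◁x,h} θ_g(x,y) e_g (xy). -/
def Hmul {k F G : Type*} [Field k] [Group F] [Group G] [Fintype F]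
    (act : G → F → G) (θ : G → F → F → kˣ) (u v : G × F → k) : G × F → k :=
  fun p => ∑ x : F, u (p.1, x) * v (act p.1 x, x⁻¹ * p.2) * (θ p.1 x (x⁻¹ * p.2) : k)

/-- Comultiplication: Δ(e_g x) = Σ_{ab=g} γ_x(a,b) e_a x ⊗ e_b x, as a function of two
basis indices. -/
def Hcomul {k F G : Type*} [Field k] [Group F] [Group G] [DecidableEq F]
    (γ : F → G → G → kˣ) (u : G × F → k) : (G × F) → (G × F) → k :=
  fun p q => if p.2 = q.2 then (γ p.2 p.1 q.1 : k) * u (p.1 * q.1, p.2) else 0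

/-- The element Σ_{g∈G} t(g) e_g x of H. -/
def elt {k F G : Type*} [Field k] [Group F] [Group G] [DecidableEq F]
    (t : G → kˣ) (x : F) : G × F → k :=
  fun p => if p.2 = x then (t p.1 : k) else 0

/-- u is group-like: u ≠ 0 and Δ(u) = u ⊗ u. -/
def IsGroupLike {k F G : Type*} [Field k] [Group F] [Group G] [DecidableEq F]
    (γ : F → G → G → kˣ) (u : G × F → k) : Prop :=
  u ≠ 0 ∧ ∀ p q : G × F, Hcomul γ u p q = u p * u q

/-- u is central in H: u·v = v·u for all v. -/
def IsCentral {k F G : Type*} [Field k] [Group F] [Group G] [Fintype F]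
    (act : G → F → G) (θ : G → F → F → kˣ) (u : G × F → k) : Prop :=
  ∀ v : G × F → k, Hmul act θ u v = Hmul act θ v u

set_option linter.unusedSectionVars false
set_option linter.unusedVariables false

section Aux
variable {k F G : Type*} [Field k] [Group F] [Group G] [Fintype F] [DecidableEq F]
  [DecidableEq G]
variable (act : G → F → G) (θ : G → F → F → kˣ) (γ : F → G → G → kˣ)

lemma elt_ne_zero (t : G → kˣ) (a : F) : elt (k := k) t a ≠ 0 := by
  intro h
  have := congrFun h (1, a)
  simp [elt] at this

lemma Hmul_elt_elt (t s : G → kˣ) (a b : F) :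
    Hmul act θ (elt t a) (elt s b)
      = elt (fun g => t g * s (act g a) * θ g a b) (a * b) := by
  funext p
  obtain ⟨g, z⟩ := p
  show (∑ x : F, _) = _
  rw [Finset.sum_eq_single a]
  · by_cases h : z = a * b
    · subst h
      have e1 : a⁻¹ * (a * b) = b := by group
      simp [elt, e1]
    · have e2 : ¬ (a⁻¹ * z = b) := fun hh => h (by rw [← hh]; group)
      simp [elt, e2, h]
  · intro x _ hx
    simp [elt, hx]
  · intro h
    exact absurd (Finset.mem_univ a) h

lemma Hmul_one (hact1 : ∀ g : G, act g 1 = g)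
    (hθnorm : ∀ (g : G) (x : F), θ g 1 x = 1 ∧ θ g x 1 = 1)
    (v : G × F → k) : Hmul act θ v (elt 1 1) = v := by
  funext p
  obtain ⟨g, z⟩ := p
  show (∑ x : F, _) = _
  rw [Finset.sum_eq_single z]
  · simp [elt, (hθnorm g z).2]
  · intro x _ hx
    have : ¬ (x⁻¹ * z = 1) := by
      intro h
      rw [inv_mul_eq_one] at h
      exact hx h
    simp [elt, this]
  · intro h
    exact absurd (Finset.mem_univ z) h

lemma one_Hmul (hact1 : ∀ g : G, act g 1 = g)
    (hθnorm : ∀ (g : G) (x : F), θ g 1 x = 1 ∧ θ g x 1 = 1)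
    (v : G × F → k) : Hmul act θ (elt 1 1) v = v := by
  funext p
  obtain ⟨g, z⟩ := p
  show (∑ x : F, _) = _
  rw [Finset.sum_eq_single 1]
  · simp [elt, hact1, (hθnorm g z).1]
  · intro x _ hx
    simp [elt, hx]
  · intro h
    exact absurd (Finset.mem_univ 1) h

lemma Hmul_assoc (hactmul : ∀ (g : G) (x y : F), act g (x * y) = act (act g x) y)
    (hc1 : ∀ (g : G) (x y z : F),
      θ (act g x) y z * θ g x (y * z) = θ g (x * y) z * θ g x y)
    (u v w : G × F → k) :
    Hmul act θ (Hmul act θ u v) w = Hmul act θ u (Hmul act θ v w) := by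
  funext p
  obtain ⟨g, z⟩ := p
  simp only [Hmul, Finset.sum_mul, Finset.mul_sum]
  rw [Finset.sum_comm]
  refine Finset.sum_congr rfl fun x _ => ?_
  refine Fintype.sum_equiv (Equiv.mulLeft x⁻¹) _ _ fun y => ?_
  simp only [Equiv.coe_mulLeft]
  have e1 : x * (x⁻¹ * y) = y := by group
  have e2 : (x⁻¹ * y)⁻¹ * (x⁻¹ * z) = y⁻¹ * z := by group
  have e3 : act (act g x) (x⁻¹ * y) = act g y := by rw [← hactmul, e1]
  have hθ := congrArg Units.val (hc1 g x (x⁻¹ * y) (y⁻¹ * z))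
  simp only [Units.val_mul] at hθ
  have e4 : x⁻¹ * y * (y⁻¹ * z) = x⁻¹ * z := by group
  rw [e4, e1] at hθ
  rw [e2, e3]
  linear_combination (u (g, x) * v (act g x, x⁻¹ * y) *
    w (act g y, y⁻¹ * z)) * hθ.symm


lemma grouplike_iff (t : G → kˣ) (a : F) :
    IsGroupLike γ (elt t a) ↔
      ∀ g h : G, (γ a g h : k) * t (g * h) = t g * t h := by
  constructor
  · rintro ⟨-, hgl⟩ g h
    have := hgl (g, a) (h, a)
    simpa [Hcomul, elt] using this
  · intro hgl
    refine ⟨elt_ne_zero t a, ?_⟩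
    rintro ⟨g, x⟩ ⟨h, y⟩
    simp only [Hcomul, elt]
    by_cases hxy : x = y
    · subst hxy
      by_cases hxa : x = a
      · subst hxa
        simp [hgl g h]
      · simp [hxa]
    · rw [if_neg hxy]
      by_cases hxa : x = a
      · have : ¬ (y = a) := fun hy => hxy (hxa.trans hy.symm)
        simp [this]
      · simp [hxa]

lemma central_triv_act (hθnorm : ∀ (g : G) (x : F), θ g 1 x = 1 ∧ θ g x 1 = 1)
    (hact1 : ∀ g : G, act g 1 = g)
    (t : G → kˣ) (a : F) (h : IsCentral act θ (elt t a)) :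
    ∀ g : G, act g a = g := by
  intro g
  by_contra hg
  have key := congrFun (h (fun p => if p = (act g a, 1) then (1:k) else 0)) (g, a)
  have hL : Hmul act θ (elt t a) (fun p => if p = (act g a, 1) then (1:k) else 0) (g, a)
      = t g := by
    show (∑ x : F, _) = _
    rw [Finset.sum_eq_single a]
    · simp [elt, (hθnorm g a).2]
    · intro x _ hx
      simp [elt, hx]
    · intro hh
      exact absurd (Finset.mem_univ a) hh
  have hR : Hmul act θ (fun p => if p = (act g a, 1) then (1:k) else 0) (elt t a) (g, a)
      = 0 := by
    show (∑ x : F, _) = _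
    refine Finset.sum_eq_zero fun x _ => ?_
    by_cases hx : x = 1
    · subst hx
      have : ¬ ((g, (1:F)) = (act g a, 1)) := by
        intro hh
        exact hg (congrArg Prod.fst hh).symm
      simp [this]
    · have : ¬ (x⁻¹ * a = a) := by
        intro hh
        apply hx
        have h2 : x⁻¹ = 1 := mul_right_cancel (hh.trans (one_mul a).symm)
        rwa [inv_eq_one] at h2
      simp [elt, this]
  rw [hL, hR] at key
  exact (t g).ne_zero key

lemma central_center (hθnorm : ∀ (g : G) (x : F), θ g 1 x = 1 ∧ θ g x 1 = 1)
    (hact1 : ∀ g : G, act g 1 = g)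
    (t : G → kˣ) (a : F) (h : IsCentral act θ (elt t a))
    (htriv : ∀ g : G, act g a = g) :
    ∀ y : F, a * y = y * a := by
  intro y
  by_contra hy
  have key := congrFun (h (fun p => if p = ((1:G), y) then (1:k) else 0)) (1, y * a)
  have hL : Hmul act θ (elt t a) (fun p => if p = ((1:G), y) then (1:k) else 0) (1, y * a)
      = 0 := by
    show (∑ x : F, _) = _
    refine Finset.sum_eq_zero fun x _ => ?_
    by_cases hx : x = a
    · subst hx
      have : ¬ ((act 1 x, x⁻¹ * (y * x)) = ((1:G), y)) := by
        intro hh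
        have := congrArg Prod.snd hh
        simp only at this
        rw [inv_mul_eq_iff_eq_mul] at this
        exact hy this.symm
      simp [this]
    · simp [elt, hx]
  have hR : Hmul act θ (fun p => if p = ((1:G), y) then (1:k) else 0) (elt t a) (1, y * a)
      = t (act 1 y) * θ 1 y a := by
    show (∑ x : F, _) = _
    rw [Finset.sum_eq_single y]
    · have e : y⁻¹ * (y * a) = a := by group
      simp [elt, e]
    · intro x _ hx
      have : ¬ ((1:G), x) = ((1:G), y) := by
        intro hh
        exact hx (congrArg Prod.snd hh)
      simp [this]
    · intro hh
      exact absurd (Finset.mem_univ y) hh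
  rw [hL, hR] at key
  have : (t (act 1 y) : k) * θ 1 y a ≠ 0 := by
    exact mul_ne_zero (t _).ne_zero (θ 1 y a).ne_zero
  exact this key.symm

lemma central_mul (hactmul : ∀ (g : G) (x y : F), act g (x * y) = act (act g x) y)
    (hc1 : ∀ (g : G) (x y z : F),
      θ (act g x) y z * θ g x (y * z) = θ g (x * y) z * θ g x y)
    (u v : G × F → k) (hu : IsCentral act θ u) (hv : IsCentral act θ v) :
    IsCentral act θ (Hmul act θ u v) := by
  intro w
  rw [Hmul_assoc act θ hactmul hc1, hv w, ← Hmul_assoc act θ hactmul hc1, hu w,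
    Hmul_assoc act θ hactmul hc1]

lemma central_inv (hact1 : ∀ g : G, act g 1 = g)
    (hactmul : ∀ (g : G) (x y : F), act g (x * y) = act (act g x) y)
    (hθnorm : ∀ (g : G) (x : F), θ g 1 x = 1 ∧ θ g x 1 = 1)
    (hc1 : ∀ (g : G) (x y z : F),
      θ (act g x) y z * θ g x (y * z) = θ g (x * y) z * θ g x y)
    (u u' : G × F → k) (hu : IsCentral act θ u)
    (huu' : Hmul act θ u u' = elt 1 1) :
    IsCentral act θ u' := by
  intro v
  have assoc := Hmul_assoc act θ hactmul hc1
  calc Hmul act θ u' v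
      = Hmul act θ u' (Hmul act θ v (Hmul act θ u u')) := by
        rw [huu', Hmul_one act θ hact1 hθnorm]
    _ = Hmul act θ u' (Hmul act θ (Hmul act θ v u) u') := by rw [← assoc v u u']
    _ = Hmul act θ u' (Hmul act θ (Hmul act θ u v) u') := by rw [← hu v]
    _ = Hmul act θ u' (Hmul act θ u (Hmul act θ v u')) := by rw [assoc u v u']
    _ = Hmul act θ (Hmul act θ u' u) (Hmul act θ v u') := by
        rw [assoc u' u (Hmul act θ v u')]
    _ = Hmul act θ (Hmul act θ u u') (Hmul act θ v u') := by rw [← hu u']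
    _ = Hmul act θ v u' := by rw [huu', one_Hmul act θ hact1 hθnorm]

end Aux

/-- The set Z_c(F) of c-central elements (a ∈ F such that some
Σ_g t_a(g) e_g a is a central group-like of H = k^G_ω #_c kF) is a subgroup of the
center Z(F) of F, and every element of Z_c(F) acts trivially on G. -/
theorem stmt9 {k : Type*} [Field k] {F G : Type*} [Group F] [Group G]
    [Fintype F] [Fintype G] [DecidableEq F] [DecidableEq G]
    (act : G → F → G)
    (hact1 : ∀ g : G, act g 1 = g)
    (hactmul : ∀ g : G, ∀ x y : F, act g (x * y) = act (act g x) y)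
    (hactauto : ∀ g h : G, ∀ x : F, act (g * h) x = act g x * act h x)
    (ω : G → G → G → kˣ)
    (hω : ∀ a b c d : G,
      ω a b c * ω a (b * c) d * ω b c d = ω (a * b) c d * ω a b (c * d))
    (hωnorm : ∀ a b : G, ω 1 a b = 1 ∧ ω a 1 b = 1 ∧ ω a b 1 = 1)
    (γ : F → G → G → kˣ) (θ : G → F → F → kˣ)
    (hγnorm : ∀ x : F, ∀ g : G, γ x 1 g = 1 ∧ γ x g 1 = 1)
    (hγ1 : ∀ g h : G, γ 1 g h = 1)
    (hθnorm : ∀ g : G, ∀ x : F, θ g 1 x = 1 ∧ θ g x 1 = 1)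
    -- cleft condition (2.2)
    (hc1 : ∀ (g : G) (x y z : F),
      θ (act g x) y z * θ g x (y * z) = θ g (x * y) z * θ g x y)
    -- cleft condition (2.3)
    (hc2 : ∀ (x : F) (g h l : G),
      γ x (g * h) l * γ x g h * ω (act g x) (act h x) (act l x)
        = γ x h l * γ x g (h * l) * ω g h l)
    -- cleft condition (2.4)
    (hc3 : ∀ (x y : F) (g h : G),
      γ (x * y) g h / (γ x g h * γ y (act g x) (act h x))
        = θ g x y * θ h x y / θ (g * h) x y)
    (Zc : Set F)
    (hZc : ∀ a : F, a ∈ Zc ↔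
      ∃ t : G → kˣ, IsGroupLike γ (elt t a) ∧ IsCentral act θ (elt t a)) :
    (∃ S : Subgroup F, (S : Set F) = Zc ∧ S ≤ Subgroup.center F) ∧
      ∀ a ∈ Zc, ∀ g : G, act g a = g := by
  have htriv : ∀ a ∈ Zc, ∀ g : G, act g a = g := by
    intro a ha g
    obtain ⟨t, _, hc⟩ := (hZc a).1 ha
    exact central_triv_act act θ hθnorm hact1 t a hc g
  have hcen : ∀ a ∈ Zc, ∀ y : F, a * y = y * a := by
    intro a ha y
    obtain ⟨t, _, hc⟩ := (hZc a).1 ha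
    exact central_center act θ hθnorm hact1 t a hc (htriv a ha) y
  have hone : (1 : F) ∈ Zc := by
    rw [hZc]
    refine ⟨1, ?_, ?_⟩
    · rw [grouplike_iff]
      intro g h
      simp [hγ1 g h]
    · intro v
      rw [one_Hmul act θ hact1 hθnorm, Hmul_one act θ hact1 hθnorm]
  have hmulmem : ∀ a ∈ Zc, ∀ b ∈ Zc, a * b ∈ Zc := by
    intro a ha b hb
    obtain ⟨t, hgt, hct⟩ := (hZc a).1 ha
    obtain ⟨s, hgs, hcs⟩ := (hZc b).1 hb
    have hta := htriv a ha
    have hA := (grouplike_iff γ t a).1 hgt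
    have hB := (grouplike_iff γ s b).1 hgs
    have hprod : Hmul act θ (elt t a) (elt s b)
        = elt (fun g => t g * s g * θ g a b) (a * b) := by
      rw [Hmul_elt_elt]
      funext p
      obtain ⟨g, z⟩ := p
      simp only [elt, hta g]
    rw [hZc]
    refine ⟨fun g => t g * s g * θ g a b, ?_, ?_⟩
    · rw [grouplike_iff]
      intro g h
      have e := congrArg Units.val (hc3 a b g h)
      rw [hta g, hta h] at e
      simp only [Units.val_div_eq_div_val, Units.val_mul] at e
      rw [div_eq_div_iff
        (mul_ne_zero (γ a g h).ne_zero (γ b g h).ne_zero)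
        (θ (g * h) a b).ne_zero] at e
      simp only [Units.val_mul]
      linear_combination ((t (g * h) : k) * (s (g * h) : k)) * e
        + ((θ g a b : k) * (θ h a b : k) * (γ b g h : k) * (s (g * h) : k)) * hA g h
        + ((θ g a b : k) * (θ h a b : k) * (t g : k) * (t h : k)) * hB g h
    · rw [← hprod]
      exact central_mul act θ hactmul hc1 _ _ hct hcs
  have hinvmem : ∀ a ∈ Zc, a⁻¹ ∈ Zc := by
    intro a ha
    obtain ⟨t, hgt, hct⟩ := (hZc a).1 ha
    have hta := htriv a ha
    have hA := (grouplike_iff γ t a).1 hgt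
    have h1 : a * a⁻¹ = 1 := mul_inv_cancel a
    have hprod : Hmul act θ (elt t a)
        (elt (fun g => (t g * θ g a a⁻¹)⁻¹) a⁻¹) = elt 1 1 := by
      rw [Hmul_elt_elt, h1]
      funext p
      obtain ⟨g, z⟩ := p
      simp only [elt, hta g, Pi.one_apply]
      have : t g * (t g * θ g a a⁻¹)⁻¹ * θ g a a⁻¹ = 1 := by
        rw [mul_inv]; group
      rw [this]
    rw [hZc]
    refine ⟨fun g => (t g * θ g a a⁻¹)⁻¹, ?_,
      central_inv act θ hact1 hactmul hθnorm hc1 _ _ hct hprod⟩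
    rw [grouplike_iff]
    intro g h
    have e := congrArg Units.val (hc3 a a⁻¹ g h)
    rw [hta g, hta h, h1, hγ1 g h] at e
    simp only [Units.val_div_eq_div_val, Units.val_mul, Units.val_one] at e
    rw [div_eq_div_iff
      (mul_ne_zero (γ a g h).ne_zero (γ a⁻¹ g h).ne_zero)
      (θ (g * h) a a⁻¹).ne_zero] at e
    simp only [Units.val_inv_eq_inv_val, Units.val_mul]
    have n1 : (t (g * h) : k) * (θ (g * h) a a⁻¹ : k) ≠ 0 :=
      mul_ne_zero (t _).ne_zero (θ _ _ _).ne_zero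
    have n2 : (t g : k) * (θ g a a⁻¹ : k) ≠ 0 :=
      mul_ne_zero (t _).ne_zero (θ _ _ _).ne_zero
    have n3 : (t h : k) * (θ h a a⁻¹ : k) ≠ 0 :=
      mul_ne_zero (t _).ne_zero (θ _ _ _).ne_zero
    field_simp
    linear_combination (-(t (g * h) : k)) * e
      + (-((γ a⁻¹ g h : k) * (θ g a a⁻¹ : k) * (θ h a a⁻¹ : k))) * hA g h
  refine ⟨⟨{ carrier := Zc,
             one_mem' := hone,
             mul_mem' := fun {x y} hx hy => hmulmem x hx y hy,
             inv_mem' := fun {x} hx => hinvmem x hx }, rfl, ?_⟩, htriv⟩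
  intro a ha
  rw [Subgroup.mem_center_iff]
  intro y
  exact (hcen a ha y).symm
end

section
/- Let H = k^G_ω #_c kF. The set Γ(H) of group-like elements of H forms a group under multiplication, fitting into a short exact sequence 1 → Ĝ → Γ(H) → F^γ → 1, where Ĝ = Hom(G,kˣ) embeds via χ ↦ Σ_g χ(g) e_g, and the surjection sends Σ_g t(g) e_g x to x. -/
/-- The unit 1 = Σ_g e_g of H. -/
def Hone {k F G : Type*} [Field k] [Group F] [Group G] [DecidableEq F] : G × F → k :=
  fun p => if p.2 = 1 then 1 else 0

section Aux
variable {k F G : Type*} [Field k] [Group F] [Group G] [Fintype F] [DecidableEq F]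

lemma Hmul_elt (act : G → F → G) (θ : G → F → F → kˣ) (t s : G → kˣ) (x y : F) :
    Hmul act θ (elt t x) (elt s y) =
      elt (fun g => t g * s (act g x) * θ g x y) (x * y) := by
  funext p
  unfold Hmul elt
  rw [Finset.sum_eq_single x]
  · by_cases h : p.2 = x * y
    · have h2 : x⁻¹ * p.2 = y := by rw [h]; group
      simp [h, h2]
    · have h2 : x⁻¹ * p.2 ≠ y := fun hh => h (by rw [← hh]; group)
      simp [h, h2]
  · intro b _ hb; simp [hb]
  · intro h; simp at h

lemma isGroupLike_elt_iff (γ : F → G → G → kˣ) (t : G → kˣ) (x : F) :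
    IsGroupLike γ (elt t x) ↔
      ∀ a b : G, (γ x a b : k) * t (a * b) = (t a : k) * t b := by
  constructor
  · rintro ⟨-, h⟩ a b
    have := h (a, x) (b, x)
    simpa [Hcomul, elt] using this
  · intro h
    refine ⟨?_, ?_⟩
    · intro h0
      have := congrFun h0 (1, x)
      simp [elt] at this
    · rintro ⟨a, y⟩ ⟨b, z⟩
      unfold Hcomul elt
      by_cases hyz : y = z
      · subst hyz
        by_cases hx : y = x
        · subst hx; simpa using h a b
        · simp [hx]
      · have : ¬ (y = x ∧ z = x) := fun ⟨h1, h2⟩ => hyz (h1.trans h2.symm)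
        rcases not_and_or.mp this with h1 | h1 <;> simp [hyz, h1]

lemma grouplike_form (γ : F → G → G → kˣ) (hγnorm : ∀ x : F, ∀ g : G, γ x 1 g = 1 ∧ γ x g 1 = 1)
    (u : G × F → k) (hu : IsGroupLike γ u) :
    ∃ (x : F) (t : G → kˣ), u = elt t x ∧
      ∀ a b : G, (γ x a b : k) * t (a * b) = (t a : k) * t b := by
  obtain ⟨hne, h⟩ := hu
  obtain ⟨p0, hp0⟩ := Function.ne_iff.mp hne
  obtain ⟨g0, x⟩ := p0
  simp only [Pi.zero_apply] at hp0
  -- support is in fiber x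
  have hfib : ∀ b : G, ∀ z : F, z ≠ x → u (b, z) = 0 := by
    intro b z hz
    have h2 := (h (b, z) (g0, x)).symm
    simp only [Hcomul] at h2
    rw [if_neg hz] at h2
    rcases mul_eq_zero.mp h2 with h1 | h1
    · exact h1
    · exact absurd h1 hp0
  -- nonvanishing on fiber
  have hnz : ∀ g : G, u (g, x) ≠ 0 := by
    intro b hb
    apply hp0
    have h2 := h (g0 * b⁻¹, x) (b, x)
    simp only [Hcomul] at h2
    rw [if_pos trivial, hb, mul_zero, inv_mul_cancel_right] at h2
    exact (mul_eq_zero.mp h2).resolve_left (Units.ne_zero _)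
  refine ⟨x, fun g => Units.mk0 (u (g, x)) (hnz g), ?_, ?_⟩
  · funext p
    obtain ⟨a, y⟩ := p
    by_cases hy : y = x
    · subst hy; simp [elt]
    · simp [elt, hy, hfib a y hy]
  · intro a b
    have := h (a, x) (b, x)
    simpa [Hcomul] using this

end Aux

/-- The group-like elements Γ(H) of H = k^G_ω #_c kF form a group under
multiplication, fitting into a short exact sequence 1 → Ĝ → Γ(H) → F^γ → 1:
(1) products of group-likes are group-like, with "p-degrees" multiplying;
(2) every group-like is invertible inside Γ(H);
(3) Ĝ embeds via χ ↦ Σ_g χ(g) e_g , landing in group-likes (injectively, by definition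
    of `elt`);
(4) every group-like has the form Σ_g t(g) e_g x with δt = γ_x (in particular its image
    x under `p` lies in F^γ), and conversely every x ∈ F^γ is hit;
(5) exactness in the middle: a group-like mapping to 1 ∈ F comes from a character. -/
theorem stmt11 {k : Type*} [Field k] {F G : Type*} [Group F] [Group G]
    [Fintype F] [Fintype G] [DecidableEq F] [DecidableEq G]
    (act : G → F → G)
    (hact1 : ∀ g : G, act g 1 = g)
    (hactmul : ∀ g : G, ∀ x y : F, act g (x * y) = act (act g x) y)
    (hactauto : ∀ g h : G, ∀ x : F, act (g * h) x = act g x * act h x)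
    (ω : G → G → G → kˣ)
    (hω : ∀ a b c d : G,
      ω a b c * ω a (b * c) d * ω b c d = ω (a * b) c d * ω a b (c * d))
    (hωnorm : ∀ a b : G, ω 1 a b = 1 ∧ ω a 1 b = 1 ∧ ω a b 1 = 1)
    (γ : F → G → G → kˣ) (θ : G → F → F → kˣ)
    (hγnorm : ∀ x : F, ∀ g : G, γ x 1 g = 1 ∧ γ x g 1 = 1)
    (hγ1 : ∀ g h : G, γ 1 g h = 1)
    (hθnorm : ∀ g : G, ∀ x : F, θ g 1 x = 1 ∧ θ g x 1 = 1)
    -- cleft condition (2.2)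
    (hc1 : ∀ (g : G) (x y z : F),
      θ (act g x) y z * θ g x (y * z) = θ g (x * y) z * θ g x y)
    -- cleft condition (2.3)
    (hc2 : ∀ (x : F) (g h l : G),
      γ x (g * h) l * γ x g h * ω (act g x) (act h x) (act l x)
        = γ x h l * γ x g (h * l) * ω g h l)
    -- cleft condition (2.4)
    (hc3 : ∀ (x y : F) (g h : G),
      γ (x * y) g h / (γ x g h * γ y (act g x) (act h x))
        = θ g x y * θ h x y / θ (g * h) x y)
    :
    -- (1) closure under multiplication, compatibly with p : Σ_g t(g) e_g x ↦ x
    (∀ (t s : G → kˣ) (x y : F), IsGroupLike γ (elt t x) → IsGroupLike γ (elt s y) →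
      ∃ r : G → kˣ, Hmul act θ (elt t x) (elt s y) = elt r (x * y) ∧
        IsGroupLike γ (elt r (x * y))) ∧
    -- (2) inverses exist among group-likes
    (∀ u : G × F → k, IsGroupLike γ u →
      ∃ w : G × F → k, IsGroupLike γ w ∧
        Hmul act θ u w = Hone ∧ Hmul act θ w u = Hone) ∧
    -- (3) the embedding of Ĝ
    (∀ χ : G →* kˣ, IsGroupLike γ (elt (fun g => χ g) (1 : F))) ∧
    -- (4) form of group-likes and surjectivity of p onto F^γ
    (∀ u : G × F → k, IsGroupLike γ u →
      ∃ (x : F) (t : G → kˣ), u = elt t x ∧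
        ∀ a b : G, (γ x a b : k) = t a * t b / t (a * b)) ∧
    (∀ x : F, (∃ t : G → kˣ, t 1 = 1 ∧ ∀ a b : G, γ x a b = t a * t b / t (a * b)) →
      ∃ t : G → kˣ, IsGroupLike γ (elt t x)) ∧
    -- (5) exactness: kernel of p = image of Ĝ
    (∀ t : G → kˣ, IsGroupLike γ (elt t (1 : F)) →
      ∃ χ : G →* kˣ, ∀ g : G, t g = χ g) := by
  refine ⟨?_, ?_, ?_, ?_, ?_, ?_⟩
  -- (1)
  · intro t s x y ht hs
    rw [isGroupLike_elt_iff] at ht hs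
    refine ⟨fun g => t g * s (act g x) * θ g x y, Hmul_elt act θ t s x y, ?_⟩
    rw [isGroupLike_elt_iff]
    intro a b
    have h3 := congrArg Units.val (div_eq_div_iff_mul_eq_mul.mp (hc3 x y a b))
    push_cast at h3
    have hta := ht a b
    have hsa := hs (act a x) (act b x)
    push_cast
    rw [hactauto a b x]
    linear_combination ((t (a*b) : k) * s (act a x * act b x)) * h3
      + ((θ a x y : k) * θ b x y * s (act a x * act b x) * γ y (act a x) (act b x)) * hta
      + ((θ a x y : k) * θ b x y * (t a : k) * t b) * hsa
  -- (2)
  · intro u hu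
    obtain ⟨x, t, rfl, ht⟩ := grouplike_form γ hγnorm u hu
    set s : G → kˣ := fun h => (t (act h x⁻¹) * θ (act h x⁻¹) x x⁻¹)⁻¹ with hsdef
    have hback : ∀ g : G, act (act g x) x⁻¹ = g := by
      intro g; rw [← hactmul, mul_inv_cancel, hact1]
    have hfwd : ∀ g : G, act (act g x⁻¹) x = g := by
      intro g; rw [← hactmul, inv_mul_cancel, hact1]
    refine ⟨elt s x⁻¹, ?_, ?_, ?_⟩
    · rw [isGroupLike_elt_iff]
      intro a b
      have h3' := div_eq_div_iff_mul_eq_mul.mp (hc3 x x⁻¹ (act a x⁻¹) (act b x⁻¹))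
      rw [mul_inv_cancel, hγ1, hfwd, hfwd, one_mul] at h3'
      have h3 := congrArg Units.val h3'
      push_cast at h3
      have hta := ht (act a x⁻¹) (act b x⁻¹)
      simp only [hsdef]
      push_cast
      rw [hactauto a b x⁻¹]
      simp only [← one_div] at h3 hta ⊢
      field_simp
      linear_combination (-(γ (1/x) a b : k) * θ (act a (1/x)) x (1/x) * θ (act b (1/x)) x (1/x)) * hta
        + (-(t (act a (1/x) * act b (1/x)) : k)) * h3
    · rw [Hmul_elt, mul_inv_cancel]
      funext p
      simp only [elt, Hone]
      by_cases hp : p.2 = 1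
      · simp only [hp, if_pos rfl]
        simp only [hsdef, hback p.1]
        push_cast
        field_simp
      · simp [hp]
    · rw [Hmul_elt, inv_mul_cancel]
      funext p
      simp only [elt, Hone]
      by_cases hp : p.2 = 1
      · simp only [hp, if_pos rfl]
        have hθeq : θ p.1 x⁻¹ x = θ (act p.1 x⁻¹) x x⁻¹ := by
          have h1 := hc1 (act p.1 x⁻¹) x x⁻¹ x
          rw [hfwd, inv_mul_cancel, mul_inv_cancel, (hθnorm _ _).2, (hθnorm _ _).1,
            mul_one, one_mul] at h1
          exact h1
        simp only [hsdef, hθeq]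
        push_cast
        field_simp
      · simp [hp]
  -- (3)
  · intro χ
    rw [isGroupLike_elt_iff]
    intro a b
    rw [hγ1]
    push_cast [map_mul]
    ring
  -- (4a)
  · intro u hu
    obtain ⟨x, t, rfl, ht⟩ := grouplike_form γ hγnorm u hu
    refine ⟨x, t, rfl, fun a b => ?_⟩
    rw [eq_div_iff (Units.ne_zero (t (a * b)))]
    exact ht a b
  -- (4b)
  · rintro x ⟨t, -, ht⟩
    refine ⟨t, (isGroupLike_elt_iff γ t x).mpr fun a b => ?_⟩
    have := congrArg Units.val (ht a b)
    push_cast at this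
    rw [this]
    field_simp
  -- (5)
  · intro t ht
    rw [isGroupLike_elt_iff] at ht
    have hm : ∀ a b : G, t (a * b) = t a * t b := by
      intro a b
      have := ht a b
      rw [hγ1] at this
      exact Units.ext (by push_cast; simpa using this)
    exact ⟨MonoidHom.mk' t hm, fun g => rfl⟩
end

section
/- Let G be a finite group with H²(G, kˣ) = 1 (trivial Schur multiplier over kˣ), and ω a normalized 3-cocycle of G. Then every central element of G is c_ω-central: Z(G) = Z_{c_ω}(G), where c_ω is the canonical cleft object of the twisted quantum double D^ω(G). -/
/-- Conjugation: the right action of G on itself, g ◁ x = x⁻¹gx. -/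
def conjAct {G : Type*} [Group G] (g x : G) : G := x⁻¹ * g * x

/-- γ_z(x,y) = ω(x,y,z)·ω(z,x^z,y^z)/ω(x,z,y^z), the first cleft datum of D^ω(G). -/
def gammaD {k G : Type*} [Field k] [Group G] (ω : G → G → G → kˣ) (z x y : G) : kˣ :=
  ω x y z * ω z (z⁻¹ * x * z) (z⁻¹ * y * z) / ω x z (z⁻¹ * y * z)

/-- θ_g(x,y) = ω(g,x,y)·ω(x,y,g^{xy})/ω(x,g^x,y), the second cleft datum of D^ω(G). -/
def thetaD {k G : Type*} [Field k] [Group G] (ω : G → G → G → kˣ) (g x y : G) : kˣ :=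
  ω g x y * ω x y ((x * y)⁻¹ * g * (x * y)) / ω x (x⁻¹ * g * x) y

/-- If H²(G,kˣ) is trivial (every normalized 2-cocycle of G with values in
kˣ is a coboundary), then every central element of G is c_ω-central for the canonical
cleft object c_ω of D^ω(G): Z(G) = Z_{c_ω}(G).  (An element z is c_ω-central iff z ∈ Z(G)
and there is t_z : G → kˣ with δt_z = γ_z and t_z(g)θ_g(z,y) = t_z(g^y)θ_g(y,z).) -/
theorem stmt14 {G : Type*} [Group G] [Finite G] {k : Type*} [Field k]
    (ω : G → G → G → kˣ)
    (hω : ∀ a b c d : G,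
      ω a b c * ω a (b * c) d * ω b c d = ω (a * b) c d * ω a b (c * d))
    (hnorm : ∀ a b : G, ω 1 a b = 1 ∧ ω a 1 b = 1 ∧ ω a b 1 = 1)
    -- triviality of H²(G, kˣ)
    (hH2 : ∀ β : G → G → kˣ, (∀ g : G, β 1 g = 1 ∧ β g 1 = 1) →
      (∀ g h l : G, β g h * β (g * h) l = β h l * β g (h * l)) →
      ∃ t : G → kˣ, t 1 = 1 ∧ ∀ g h : G, β g h = t g * t h / t (g * h)) :
    ∀ z ∈ Subgroup.center G,
      ∃ t : G → kˣ,
        (∀ g h : G, gammaD ω z g h = t g * t h / t (g * h)) ∧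
        (∀ g y : G, t g * thetaD ω g z y = t (conjAct g y) * thetaD ω g y z) := by
  intro z hz
  have hzc : ∀ g : G, g * z = z * g := Subgroup.mem_center_iff.mp hz
  have hcz : ∀ x : G, z⁻¹ * x * z = x := by
    intro x
    rw [hzc (z⁻¹ * x)]
    group
  have l2 : ∀ a b : G, (z * b)⁻¹ * a * (z * b) = b⁻¹ * a * b := by
    intro a b
    have h1 : (z * b)⁻¹ * a * (z * b) = b⁻¹ * (z⁻¹ * a * z) * b := by group
    rw [h1, hcz]
  have l3 : ∀ a b : G, (b * z)⁻¹ * a * (b * z) = b⁻¹ * a * b := by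
    intro a b
    rw [hzc b]
    exact l2 a b
  -- β := γ_z is a normalized 2-cocycle
  have hβn : ∀ g : G, gammaD ω z 1 g = 1 ∧ gammaD ω z g 1 = 1 := by
    intro g
    constructor
    · unfold gammaD
      simp only [hcz, (hnorm g z).1, (hnorm z g).2.1]
      simp [(hnorm z g).1]
    · unfold gammaD
      simp only [hcz, (hnorm g z).2.1]
      simp [(hnorm g z).2.2, (hnorm z g).2.2]
  have hβc : ∀ g h l : G,
      gammaD ω z g h * gammaD ω z (g * h) l = gammaD ω z h l * gammaD ω z g (h * l) := by
    intro g h l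
    have c1 := hω g h l z
    have c2 := hω z g h l
    have c3 := hω g h z l
    have c4 := hω g z h l
    simp only [hzc] at c1 c2 c3 c4
    have key : (gammaD ω z g h * gammaD ω z (g * h) l) *
        ((ω g h l * ω g (h * l) z * ω h l z) *
          ((ω (z * g) h l * ω z g (h * l)) *
            ((ω (g * h) z l * ω g h (z * l)) *
              (ω g z h * ω g (z * h) l * ω z h l)))) =
        (gammaD ω z h l * gammaD ω z g (h * l)) *
        ((ω (g * h) l z * ω g h (z * l)) *
          ((ω z g h * ω z (g * h) l * ω g h l) *
            ((ω g h z * ω g (z * h) l * ω h z l) *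
              (ω (z * g) h l * ω g z (h * l))))) := by
      unfold gammaD
      simp only [hcz]
      rw [Units.ext_iff]
      push_cast
      field_simp
    rw [c1, c2, c3, c4] at key
    exact mul_right_cancel key
  obtain ⟨t, ht1, ht2⟩ := hH2 (gammaD ω z) hβn hβc
  refine ⟨t, ht2, ?_⟩
  intro g y
  have hI : thetaD ω g z y * gammaD ω z g y =
      thetaD ω g y z * gammaD ω z y (y⁻¹ * g * y) := by
    unfold thetaD gammaD
    simp only [hcz, l2, l3]
    rw [Units.ext_iff]
    push_cast
    field_simp
  have e1 := ht2 g y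
  have e2 := ht2 y (y⁻¹ * g * y)
  have hy : y * (y⁻¹ * g * y) = g * y := by group
  rw [hy] at e2
  rw [e1, e2] at hI
  show t g * thetaD ω g z y = t (y⁻¹ * g * y) * thetaD ω g y z
  have main : (t g * thetaD ω g z y) * (t y / t (g * y)) =
      (t (y⁻¹ * g * y) * thetaD ω g y z) * (t y / t (g * y)) := by
    calc (t g * thetaD ω g z y) * (t y / t (g * y))
        = thetaD ω g z y * (t g * t y / t (g * y)) := by
          rw [Units.ext_iff]; push_cast; field_simp
      _ = thetaD ω g y z * (t y * t (y⁻¹ * g * y) / t (g * y)) := hI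
      _ = (t (y⁻¹ * g * y) * thetaD ω g y z) * (t y / t (g * y)) := by
          rw [Units.ext_iff]; push_cast; field_simp
  exact mul_right_cancel main
end

section
/- For the twisted quantum double D^ω(G) over ℂ, the c_ω-center equals Z(G) ∩ G^γ: an element z ∈ G is c_ω-central if and only if z is central in G and the 2-cochain γ_z is a 2-coboundary of G. -/
lemma mulLeft {G : Type*} [Group G] [Fintype G] [DecidableEq G]
    (θ : G → G → G → ℂˣ) (t : G → ℂˣ) (z : G) (w : G × G → ℂ) (g y : G) :
    Hmul conjAct θ (elt t z) w (g, y)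
      = (t g : ℂ) * w (conjAct g z, z⁻¹ * y) * (θ g z (z⁻¹ * y) : ℂ) := by
  rw [Hmul, Fintype.sum_eq_single z]
  · simp [elt]
  · intro b hb; simp [elt, hb]

lemma mulRight {G : Type*} [Group G] [Fintype G] [DecidableEq G]
    (θ : G → G → G → ℂˣ) (t : G → ℂˣ) (z : G) (w : G × G → ℂ) (g y : G) :
    Hmul conjAct θ w (elt t z) (g, y)
      = w (g, y * z⁻¹) * (t (conjAct g (y * z⁻¹)) : ℂ) * (θ g (y * z⁻¹) z : ℂ) := by
  have hq : (y * z⁻¹)⁻¹ * y = z := by group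
  rw [Hmul, Fintype.sum_eq_single (y * z⁻¹)]
  · rw [hq]; simp [elt]
  · intro b hb
    have hb' : b⁻¹ * y ≠ z := fun hh => hb (by rw [← hh]; group)
    simp [elt, hb']

lemma key_aux {G : Type*} [Group G] (ω : G → G → G → ℂˣ) (z : G)
    (hz : ∀ a : G, z * a = a * z) (t : G → ℂˣ)
    (hcob : ∀ x y : G, gammaD ω z x y = t x * t y / t (x * y)) (g x : G) :
    (t g : ℂ) * (thetaD ω g z x : ℂ) = (t (x⁻¹ * g * x) : ℂ) * (thetaD ω g x z : ℂ) := by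
  have hc : ∀ a : G, z⁻¹ * a * z = a := by
    intro a; rw [mul_assoc, ← hz a, ← mul_assoc, inv_mul_cancel, one_mul]
  have hzx : (z * x)⁻¹ * g * (z * x) = x⁻¹ * g * x := by
    have h1 : (z * x)⁻¹ * g * (z * x) = x⁻¹ * (z⁻¹ * g * z) * x := by group
    rw [h1, hc]
  have hxz : (x * z)⁻¹ * g * (x * z) = x⁻¹ * g * x := by
    have h1 : (x * z)⁻¹ * g * (x * z) = z⁻¹ * (x⁻¹ * g * x) * z := by group
    rw [h1, hc]
  have h1 := congrArg Units.val (hcob g x)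
  have h2 := congrArg Units.val (hcob x (x⁻¹ * g * x))
  have hxA : x * (x⁻¹ * g * x) = g * x := by group
  rw [hxA] at h2
  simp only [gammaD, hc, Units.val_mul, Units.val_div_eq_div_val] at h1 h2
  simp only [thetaD, hzx, hxz, hc, Units.val_mul, Units.val_div_eq_div_val]
  set A := x⁻¹ * g * x with hA
  rw [div_eq_div_iff (Units.ne_zero _) (Units.ne_zero _)] at h1 h2
  rw [← mul_div_assoc, ← mul_div_assoc,
    div_eq_div_iff (Units.ne_zero _) (Units.ne_zero _)]
  apply mul_right_cancel₀ (mul_ne_zero (Units.ne_zero (t x)) (Units.ne_zero (t (g * x))))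
  linear_combination ((t g : ℂ) * (ω g z x : ℂ) * (t x : ℂ)) * h2
    - ((t A : ℂ) * (ω x z A : ℂ) * (t x : ℂ)) * h1

/-- For the twisted quantum double D^ω(G) over ℂ (the cleft extension for
F = G acting by conjugation, with cleft data (γ, θ) = (gammaD ω, thetaD ω)), an element
z ∈ G is c_ω-central (i.e. some Σ_g t(g) e_g z is a central group-like of D^ω(G)) if and
only if z ∈ Z(G) and the 2-cochain γ_z is a 2-coboundary of G. -/
theorem stmt15 {G : Type*} [Group G] [Fintype G] [DecidableEq G]
    (ω : G → G → G → ℂˣ)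
    (hω : ∀ a b c d : G,
      ω a b c * ω a (b * c) d * ω b c d = ω (a * b) c d * ω a b (c * d))
    (hnorm : ∀ a b : G, ω 1 a b = 1 ∧ ω a 1 b = 1 ∧ ω a b 1 = 1)
    (z : G) :
    (∃ t : G → ℂˣ,
        IsGroupLike (gammaD ω) (elt t z) ∧
        IsCentral (conjAct (G := G)) (thetaD ω) (elt t z)) ↔
      (z ∈ Subgroup.center G ∧
        ∃ t : G → ℂˣ, t 1 = 1 ∧
          ∀ x y : G, gammaD ω z x y = t x * t y / t (x * y)) := by
  have hγ11 : gammaD ω z 1 1 = 1 := by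
    simp [gammaD, (hnorm 1 z).1, (hnorm z 1).2.1, (hnorm z 1).1]
  constructor
  · rintro ⟨t, ⟨-, hgl⟩, hc⟩
    have hcob : ∀ a b : G, gammaD ω z a b = t a * t b / t (a * b) := by
      intro a b
      have h := hgl (a, z) (b, z)
      simp only [Hcomul, elt, if_pos rfl] at h
      refine Units.ext ?_
      rw [Units.val_div_eq_div_val, Units.val_mul, eq_div_iff (Units.ne_zero _)]
      exact h
    have ht1 : t 1 = 1 := by
      have h := hcob 1 1
      rw [hγ11] at h
      simpa using h.symm
    refine ⟨?_, t, ht1, hcob⟩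
    rw [Subgroup.mem_center_iff]
    intro g
    by_contra hne
    have hgz : conjAct g z ≠ g := by
      intro h
      apply hne
      calc g * z = z * (z⁻¹ * g * z) := by group
        _ = z * g := by rw [show z⁻¹ * g * z = g from h]
    have h := congrFun (hc (fun p => if p = (conjAct g z, 1) then (1 : ℂ) else 0)) (g, z)
    rw [mulLeft, mulRight] at h
    have e1 : z⁻¹ * z = 1 := inv_mul_cancel z
    have e2 : z * z⁻¹ = 1 := mul_inv_cancel z
    rw [e1, e2] at h
    simp only [Prod.mk.injEq, and_true, if_true] at h
    rw [if_neg (fun hh => hgz hh.symm)] at h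
    simp only [mul_one, zero_mul] at h
    exact mul_ne_zero (Units.ne_zero _) (Units.ne_zero _) h
  · rintro ⟨hz, t, ht1, hcob⟩
    have hz' : ∀ a : G, z * a = a * z := fun a => (Subgroup.mem_center_iff.1 hz a).symm
    have hcz : ∀ g : G, conjAct g z = g := by
      intro g
      show z⁻¹ * g * z = g
      rw [mul_assoc, ← hz' g, ← mul_assoc, inv_mul_cancel, one_mul]
    have hinv : ∀ a : G, z⁻¹ * a = a * z⁻¹ := fun a =>
      (Subgroup.mem_center_iff.1 (Subgroup.inv_mem _ hz) a).symm
    refine ⟨t, ⟨?_, ?_⟩, ?_⟩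
    · intro h0
      have := congrFun h0 (1, z)
      simp [elt, ht1] at this
    · rintro ⟨a, x⟩ ⟨b, y⟩
      simp only [Hcomul, elt]
      by_cases hxy : x = y
      · subst hxy
        rw [if_pos rfl]
        by_cases hxz : x = z
        · subst hxz
          rw [if_pos rfl, if_pos rfl, if_pos rfl]
          have h := congrArg Units.val (hcob a b)
          rw [Units.val_div_eq_div_val, Units.val_mul] at h
          rw [h, div_mul_cancel₀]
          exact Units.ne_zero _
        · rw [if_neg hxz, if_neg hxz, mul_zero, zero_mul]
      · rw [if_neg hxy]
        by_cases hxz : x = z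
        · have hyz : y ≠ z := fun hh => hxy (hxz.trans hh.symm)
          rw [if_neg hyz, mul_zero]
        · rw [if_neg hxz, zero_mul]
    · intro v
      funext p
      obtain ⟨g, y⟩ := p
      rw [mulLeft, mulRight, hcz, hinv]
      simp only [conjAct]
      linear_combination (v (g, y * z⁻¹)) * key_aux ω z hz' t hcob g (y * z⁻¹)
end

section
/- Let A be an ω-admissible subgroup of Z(G) and ν, ν' ∈ C¹(A, Ĝ) two normalized cochains trivializing β on A, with associated bicharacters (a|b)_ν = t_a(b)t_b(a)/(ν(a)(b)·ν(b)(a)) and (·|·)_{ν'}. If A ≅ ℤ/2 or A ⊆ [G,G] (the commutator subgroup), then (·|·)_ν = (·|·)_{ν'}; i.e., the bicharacter on A is independent of the choice of ν. -/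
/-- Let A be an ω-admissible subgroup of Z(G) (A consists of c_ω-central
elements, realized by the fixed family {t_a}, and β|_A is trivialized by normalized
cochains ν, ν' ∈ C¹(A,Ĝ)).  If A ≅ ℤ/2 or A ⊆ [G,G], then the associated bicharacters
(a|b)_ν = t_a(b)t_b(a)/(ν(a)(b)ν(b)(a)) and (·|·)_{ν'} coincide on A. -/
theorem stmt18 {G : Type*} [Group G] [Fintype G] [DecidableEq G]
    (ω : G → G → G → ℂˣ)
    (hω : ∀ a b c d : G,
      ω a b c * ω a (b * c) d * ω b c d = ω (a * b) c d * ω a b (c * d))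
    (hnorm : ∀ a b : G, ω 1 a b = 1 ∧ ω a 1 b = 1 ∧ ω a b 1 = 1)
    (A : Subgroup G) (hAcen : A ≤ Subgroup.center G)
    -- the fixed family {t_a}_{a∈A} of 1-cochains realizing central group-likes
    (tfam : G → G → ℂˣ)
    (htfam : ∀ a ∈ A,
      IsGroupLike (gammaD ω) (elt (tfam a) a) ∧
      IsCentral (conjAct (G := G)) (thetaD ω) (elt (tfam a) a))
    -- ν and ν' are normalized cochains in C¹(A, Ĝ) trivializing β on A
    (ν ν' : G → G → ℂˣ)
    (hνchar : ∀ a ∈ A, ∀ g h : G, ν a (g * h) = ν a g * ν a h)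
    (hν'char : ∀ a ∈ A, ∀ g h : G, ν' a (g * h) = ν' a g * ν' a h)
    (hν1 : ν 1 = fun _ => 1) (hν'1 : ν' 1 = fun _ => 1)
    (hν : ∀ a ∈ A, ∀ b ∈ A, ∀ g : G,
      ν a g * ν b g / ν (a * b) g
        = (tfam a g * tfam b (conjAct g a) / tfam (a * b) g) * thetaD ω g a b)
    (hν' : ∀ a ∈ A, ∀ b ∈ A, ∀ g : G,
      ν' a g * ν' b g / ν' (a * b) g
        = (tfam a g * tfam b (conjAct g a) / tfam (a * b) g) * thetaD ω g a b)
    -- A ≅ ℤ/2 or A ⊆ [G,G]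
    (hA : Nat.card A = 2 ∨ A ≤ commutator G) :
    ∀ a ∈ A, ∀ b ∈ A,
      tfam a b * tfam b a / (ν a b * ν b a)
        = tfam a b * tfam b a / (ν' a b * ν' b a) := by
  -- For a ∈ A, the ratio f a := ν' a / ν a is a character of G.
  intro a ha b hb
  -- it suffices to show ν a b * ν b a = ν' a b * ν' b a
  suffices h : ν a b * ν b a = ν' a b * ν' b a by rw [h]
  have hone : ∀ c ∈ A, ν c 1 = 1 ∧ ν' c 1 = 1 := by
    intro c hc
    constructor
    · have h := hνchar c hc 1 1
      rw [one_mul] at h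
      exact (mul_left_cancel (a := ν c 1) (by rw [mul_one]; exact h)).symm
    · have h := hν'char c hc 1 1
      rw [one_mul] at h
      exact (mul_left_cancel (a := ν' c 1) (by rw [mul_one]; exact h)).symm
  -- the character f c : G →* ℂˣ
  have fchar : ∀ c ∈ A, ∃ f : G →* ℂˣ, ∀ g, f g = ν' c g / ν c g := by
    intro c hc
    exact ⟨MonoidHom.mk' (fun g => ν' c g / ν c g) (fun g h => by
      simp only [hνchar c hc g h, hν'char c hc g h, div_mul_div_comm]), fun g => rfl⟩
  obtain ⟨fa, hfa⟩ := fchar a ha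
  obtain ⟨fb, hfb⟩ := fchar b hb
  -- goal follows from f a b * f b a = 1
  suffices key : fa b * fb a = 1 by
    rw [hfa, hfb, div_mul_div_comm, div_eq_one] at key
    exact key.symm
  rcases hA with hcard | hcomm
  · -- |A| = 2 : every element squares to 1, and any two nontrivial elements coincide
    have hsq : ∀ c ∈ A, c * c = 1 := by
      intro c hc
      have : (⟨c, hc⟩ : A) ^ (Nat.card A) = 1 := pow_card_eq_one'
      rw [hcard] at this
      have : (⟨c, hc⟩ : A) * (⟨c, hc⟩ : A) = 1 := by rw [← sq]; exact this
      exact Subtype.ext_iff.mp this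
    have htwo : ∀ x y : A, x ≠ 1 → y ≠ 1 → x = y := by
      intro x y hx hy
      obtain ⟨z, -, hz⟩ := (Nat.card_eq_two_iff' (1 : A)).mp hcard
      rw [hz x hx, hz y hy]
    by_cases ha1 : a = 1
    · subst ha1
      rw [hν1] at hfa
      have h1 : fa b = 1 := by rw [hfa, hν'1]; simp
      have h2 : fb 1 = 1 := map_one fb
      rw [h1, h2, mul_one]
    by_cases hb1 : b = 1
    · subst hb1
      rw [hν1] at hfb
      have h1 : fb a = 1 := by rw [hfb, hν'1]; simp
      have h2 : fa 1 = 1 := map_one fa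
      rw [h1, h2, one_mul]
    · -- a = b, both of order 2
      have hab : a = b := by
        have := htwo ⟨a, ha⟩ ⟨b, hb⟩ (by simpa [Subtype.ext_iff] using ha1)
          (by simpa [Subtype.ext_iff] using hb1)
        exact Subtype.ext_iff.mp this
      subst hab
      have : fa a * fa a = 1 := by rw [← map_mul, hsq a ha, map_one]
      calc fa a * fb a = fa a * fa a := by
            congr 1
            rw [hfa, hfb]
        _ = 1 := this
  · -- A ⊆ [G,G] : characters are trivial on the commutator subgroup
    have h1 : fa b = 1 := Abelianization.commutator_subset_ker fa (hcomm hb)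
    have h2 : fb a = 1 := Abelianization.commutator_subset_ker fb (hcomm ha)
    rw [h1, h2, mul_one]
end

section
/- Let A be an ω-admissible central subgroup of G, ν ∈ C¹(A,Ĝ) a trivializing cochain with δν = β|_A, and p̃_ν : A → SC(G,ω), a ↦ V(a, t_a·ν(a)⁻¹) the associated group monomorphism into the simple currents. Then for every a ∈ A and every irreducible module V of the quotient quasi-Hopf algebra D^ω(G,A), the double braiding is trivial: c_{p̃_ν(a),V} ∘ c_{V,p̃_ν(a)} = id, where the braiding comes from the R-matrix R = Σ_{g,h} e_g ⊗ e_h g of D^ω(G). -/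
/-- Let A be an ω-admissible central subgroup of G, ν ∈ C¹(A,Ĝ) a
trivializing cochain (δν = β|_A), p̃_ν : a ↦ V(a, t_a·ν(a)⁻¹) the associated embedding
of A into the simple currents of D^ω(G), and π_ν : D^ω(G) → D^ω(G,A),
e_g x ↦ χ_x(g) e_g x̄ the corresponding quotient map (r a set-section of G → G/A).
Then for every a ∈ A and every module V of D^ω(G,A) (a D^ω(G)-module whose action m
factors through π_ν), the double braiding coming from the R-matrix
R = Σ_{g,h} e_g ⊗ e_h g is trivial on V ⊗ p̃_ν(a): since e_g x acts on the
one-dimensional module p̃_ν(a) by δ_{g,a}·t_a(x)/ν(a)(x), the double braiding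
c_{p̃_ν(a),V} ∘ c_{V,p̃_ν(a)} is the operator Σ_g (t_a(g)/ν(a)(g))·m(e_g a) ⊗ id, and
the claim is that Σ_g (t_a(g)/ν(a)(g))·m(e_g a) = id_V. -/
theorem stmt19 {G : Type*} [Group G] [Fintype G] [DecidableEq G]
    (ω : G → G → G → ℂˣ)
    (hω : ∀ a b c d : G,
      ω a b c * ω a (b * c) d * ω b c d = ω (a * b) c d * ω a b (c * d))
    (hnorm : ∀ a b : G, ω 1 a b = 1 ∧ ω a 1 b = 1 ∧ ω a b 1 = 1)
    (A : Subgroup G) (hAcen : A ≤ Subgroup.center G)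
    -- the fixed family {t_a}_{a∈A} of 1-cochains realizing central group-likes
    (tfam : G → G → ℂˣ)
    (htfam : ∀ a ∈ A,
      IsGroupLike (gammaD ω) (elt (tfam a) a) ∧
      IsCentral (conjAct (G := G)) (thetaD ω) (elt (tfam a) a))
    -- ν ∈ C¹(A, Ĝ) is a normalized cochain trivializing β on A
    (ν : G → G → ℂˣ)
    (hνchar : ∀ a ∈ A, ∀ g h : G, ν a (g * h) = ν a g * ν a h)
    (hν1 : ν 1 = fun _ => 1)
    (hν : ∀ a ∈ A, ∀ b ∈ A, ∀ g : G,
      ν a g * ν b g / ν (a * b) g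
        = (tfam a g * tfam b (conjAct g a) / tfam (a * b) g) * thetaD ω g a b)
    -- a set-theoretic section r of G → G/A, and the scalars χ_x(g) defining π_ν
    (r : G → G) (hr1 : r 1 = 1) (hrA : ∀ x : G, x * (r x)⁻¹ ∈ A)
    (hrcoset : ∀ x y : G, x * y⁻¹ ∈ A → r x = r y)
    (χ : G → G → ℂˣ)
    (hχ : ∀ x g : G, χ x g
      = ν (x * (r x)⁻¹) g
          / (tfam (x * (r x)⁻¹) g * thetaD ω g (x * (r x)⁻¹) (r x)))
    -- V is a module over D^ω(G) ...
    (V : Type*) [AddCommGroup V] [Module ℂ V]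
    (m : G × G → V →ₗ[ℂ] V)
    (hm_mul : ∀ g h x y : G,
      m (g, x) ∘ₗ m (h, y)
        = if h = conjAct g x then ((thetaD ω g x y : ℂ)) • m (g, x * y) else 0)
    (hm_one : ∑ g : G, m (g, 1) = LinearMap.id)
    -- ... whose action factors through π_ν : D^ω(G) → D^ω(G,A)
    (hfac : ∀ b ∈ A, ∀ g x : G,
      m (g, x * b) = ((χ (x * b) g / χ x g : ℂˣ) : ℂ) • m (g, x)) :
    ∀ a ∈ A, ∑ g : G, ((tfam a g / ν a g : ℂˣ) : ℂ) • m (g, a) = LinearMap.id := by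
  intro a ha
  have hθ1 : ∀ g x : G, thetaD ω g x 1 = 1 := by
    intro g x
    simp [thetaD, (hnorm _ _).2.2, (hnorm _ _).2.1]
  have ht1 : ∀ g : G, tfam 1 g = 1 := by
    intro g
    have h := hν 1 A.one_mem 1 A.one_mem g
    simp [hν1, conjAct, hθ1, mul_div_assoc] at h
    exact h.symm
  have hra : r a = 1 := by
    have := hrcoset a 1 (by simpa using ha)
    rw [this, hr1]
  have hχa : ∀ g : G, χ a g = ν a g / tfam a g := by
    intro g
    rw [hχ, hra]
    simp [hθ1]
  have hχ1 : ∀ g : G, χ 1 g = 1 := by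
    intro g
    rw [hχ, hr1]
    simp [hν1, hθ1, ht1]
  have key : ∀ g : G, ((tfam a g / ν a g : ℂˣ) : ℂ) • m (g, a) = m (g, 1) := by
    intro g
    have h := hfac a ha g 1
    rw [one_mul] at h
    rw [h, hχa, hχ1, smul_smul, ← Units.val_mul]
    have : (tfam a g / ν a g) * (ν a g / tfam a g / 1) = 1 := by
      rw [div_one, div_mul_div_comm, mul_comm (tfam a g)]; simp
    rw [this, Units.val_one, one_smul]
  rw [← hm_one]
  exact Finset.sum_congr rfl fun g _ => key g
end
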